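/- Let Z be an n-dimensional Zinbiel algebra containing an abelian subalgebra of dimension n−1. Then Z contains an abelian ideal of dimension n−1; equivalently, α(Z) = n−1 implies β(Z) = n−1. -/
import Mathlib


variable {F : Type*} [Field F] {Z : Type*} [AddCommGroup Z] [Module F Z]

/-- `A` is a subalgebra of the algebra with multiplication `b`. -/
def IsSubalg (b : Z →ₗ[F] Z →ₗ[F] Z) (A : Submodule F Z) : Prop :=
  ∀ x ∈ A, ∀ y ∈ A, b x y ∈ A

/-- `A` is abelian: all products of elements of `A` vanish. -/
def IsAbelian (b : Z →ₗ[F] Z →ₗ[F] Z) (A : Submodule F Z) : Prop :=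
  ∀ x ∈ A, ∀ y ∈ A, b x y = 0

/-- `A` is a two-sided ideal. -/
def IsIdeal (b : Z →ₗ[F] Z →ₗ[F] Z) (A : Submodule F Z) : Prop :=
  ∀ z : Z, ∀ x ∈ A, b z x ∈ A ∧ b x z ∈ A

/-- if an `n`-dimensional Zinbiel algebra contains an abelian subalgebra of
dimension `n-1`, then it contains an abelian ideal of dimension `n-1`
(α(Z) = n-1 implies β(Z) = n-1). -/
theorem stmt3 [FiniteDimensional F Z] (b : Z →ₗ[F] Z →ₗ[F] Z)
    (hZinbiel : ∀ x y z : Z, b (b x y) z = b x (b y z) + b x (b z y))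
    (A : Submodule F Z) (hsub : IsSubalg b A) (hab : IsAbelian b A)
    (hdim : Module.finrank F A + 1 = Module.finrank F Z) :
    ∃ B : Submodule F Z, IsIdeal b B ∧ IsAbelian b B ∧
      Module.finrank F B + 1 = Module.finrank F Z := by
  refine ⟨A, ?_, hab, hdim⟩
  have hne : A ≠ ⊤ := by
    intro h
    rw [h, finrank_top] at hdim
    omega
  obtain ⟨e, he⟩ : ∃ e, e ∉ A := by
    by_contra h
    push_neg at h
    exact hne (Submodule.eq_top_iff'.mpr h)
  have hlt : A < A ⊔ Submodule.span F {e} := by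
    refine lt_of_le_of_ne le_sup_left (fun h => he ?_)
    rw [h]
    exact Submodule.mem_sup_right (Submodule.mem_span_singleton_self e)
  have hrank : Module.finrank F (A ⊔ Submodule.span F {e} : Submodule F Z)
      = Module.finrank F Z := by
    have h1 := Submodule.finrank_lt_finrank_of_lt hlt
    have h2 : Module.finrank F (A ⊔ Submodule.span F {e} : Submodule F Z)
        ≤ Module.finrank F Z := Submodule.finrank_le _
    omega
  have hspan : A ⊔ Submodule.span F {e} = ⊤ := Submodule.eq_top_of_finrank_eq hrank
  have decomp : ∀ z : Z, ∃ c ∈ A, ∃ f : F, z = c + f • e := by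
    intro z
    have hz : z ∈ A ⊔ Submodule.span F {e} := hspan ▸ Submodule.mem_top
    obtain ⟨c, hc, w, hw, hcw⟩ := Submodule.mem_sup.mp hz
    obtain ⟨f, hf⟩ := Submodule.mem_span_singleton.mp hw
    exact ⟨c, hc, f, by rw [← hcw, ← hf]⟩
  have key : ∀ c : Z, c ∈ A → ∀ f : F, f • (c + f • e) = 0 → f = 0 := by
    intro c hc f h
    by_contra hf
    apply he
    have hff : f * f ≠ 0 := mul_ne_zero hf hf
    have h1 : (f * f) • e = -(f • c) := by
      rw [eq_neg_iff_add_eq_zero, add_comm, ← smul_smul, ← smul_add]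
      exact h
    have h2 : e = (f * f)⁻¹ • ((f * f) • e) := by
      rw [smul_smul, inv_mul_cancel₀ hff, one_smul]
    rw [h2, h1]
    exact A.smul_mem _ (A.neg_mem (A.smul_mem _ hc))
  have heA : ∀ a ∈ A, b e a ∈ A := by
    intro a ha
    obtain ⟨c, hc, f, hcf⟩ := decomp (b e a)
    have h0 : b (b e a) a = 0 := by
      rw [hZinbiel, hab a ha a ha]
      simp
    rw [hcf] at h0
    have h0' : f • (c + f • e) = 0 := by
      have h1 : b c a + f • b e a = 0 := by
        simpa [LinearMap.add_apply, LinearMap.smul_apply] using h0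
      rw [hab c hc a ha, zero_add, hcf] at h1
      exact h1
    rw [hcf, key c hc f h0', zero_smul, add_zero]
    exact hc
  have haE : ∀ a ∈ A, b a e ∈ A := by
    intro a ha
    obtain ⟨c, hc, f, hcf⟩ := decomp (b a e)
    have h0 : b a (b a e) = 0 := by
      have hz := hZinbiel a a e
      rw [hab a ha a ha, hab a ha _ (heA a ha)] at hz
      simpa using hz.symm
    rw [hcf] at h0
    have h0' : f • (c + f • e) = 0 := by
      have h1 : b a c + f • b a e = 0 := by
        simpa using h0
      rw [hab a ha c hc, zero_add, hcf] at h1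
      exact h1
    rw [hcf, key c hc f h0', zero_smul, add_zero]
    exact hc
  intro z x hx
  obtain ⟨c, hc, t, hct⟩ := decomp z
  constructor
  · rw [hct]
    have hexp : b (c + t • e) x = b c x + t • b e x := by
      simp [LinearMap.add_apply, LinearMap.smul_apply]
    rw [hexp]
    exact A.add_mem (by rw [hab c hc x hx]; exact A.zero_mem) (A.smul_mem _ (heA x hx))
  · rw [hct, map_add, map_smul]
    exact A.add_mem (by rw [hab x hx c hc]; exact A.zero_mem) (A.smul_mem _ (haE x hx))
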